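/- There exists a density f supported on [0,∞) that belongs to the long-tailed density class 𝓛₀, does not belong to the subexponential density class 𝓢₀, and is not almost decreasing. -/

import Mathlib

open MeasureTheory Filter Set

noncomputable section

/-- A probability density supported on `[0, ∞)`. -/
def IsDensity (f : ℝ → ℝ) : Prop :=
  Measurable f ∧ (∀ x < (0:ℝ), f x = 0) ∧ (∀ x : ℝ, 0 ≤ f x) ∧
    ∫ y in Set.Ioi (0:ℝ), f y = 1

/-- The long-tailed density class `𝓛₀`. -/
def LongTailedDensity (f : ℝ → ℝ) : Prop :=
  (∀ᶠ x in atTop, 0 < f x) ∧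
  ∀ t : ℝ, Tendsto (fun x => f (x + t) / f x) atTop (nhds 1)

/-- The subexponential density class `𝓢₀`. -/
def SubexpDensity (f : ℝ → ℝ) : Prop :=
  LongTailedDensity f ∧
  Tendsto (fun x => (∫ y in (0:ℝ)..x, f (x - y) * f y) / f x) atTop (nhds 2)

/-- `f` is almost decreasing: beyond some `x₀ ≥ 0` it is positive and the
ratios `f y / f x` for `x₀ ≤ x ≤ y` are bounded. -/
def AlmostDecreasing (f : ℝ → ℝ) : Prop :=
  ∃ x₀ : ℝ, 0 ≤ x₀ ∧ (∀ x : ℝ, x₀ ≤ x → 0 < f x) ∧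
    ∃ C : ℝ, ∀ x y : ℝ, x₀ ≤ x → x ≤ y → f y / f x ≤ C

/-!
Take `f ∝ exp ∘ φ` on `(0, ∞)` with `φ x = √x (cos (π log₂ x) - 2)`. Since
`|φ y - φ x| = O(|y - x| / √x)`, `f` is long-tailed. But `φ (4 ^ k) = -2 ^ k` while
`φ (2 · 4 ^ k) = -3√2 · 2 ^ k`, so `f (4 ^ (k + 1)) / f (2 · 4 ^ k)` grows like
`exp ((3√2 - 2) 2 ^ k)`, and so does `(f ⋆ f) (2 · 4 ^ k) / f (2 · 4 ^ k)`, which is at least a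
constant times `f (4 ^ k) ^ 2 / f (2 · 4 ^ k)` because `f` barely varies on `[4 ^ k - 1, 4 ^ k + 1]`.
-/

open Real Topology

section ExpDensity

variable (φ : ℝ → ℝ)

-- Unless `exp ∘ φ` is integrable on `(0, ∞)`, the normaliser is the junk value `0`.
def expDensity : ℝ → ℝ :=
  (Ioi 0).indicator fun x => exp (φ x) / ∫ y in Ioi 0, exp (φ y)

variable {φ}

lemma expDensity_of_pos {x : ℝ} (hx : 0 < x) :
    expDensity φ x = exp (φ x) / ∫ y in Ioi 0, exp (φ y) :=
  indicator_of_mem hx _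

lemma integral_exp_pos_of_integrableOn (hint : IntegrableOn (fun x => exp (φ x)) (Ioi 0)) :
    0 < ∫ y in Ioi 0, exp (φ y) := by
  have : NeZero (volume.restrict (Ioi (0:ℝ))) := ⟨by simp⟩
  exact integral_exp_pos hint

lemma expDensity_nonneg (x : ℝ) : 0 ≤ expDensity φ x :=
  indicator_nonneg (fun _ _ => div_nonneg (exp_nonneg _)
    (setIntegral_nonneg measurableSet_Ioi fun _ _ => exp_nonneg _)) x

lemma measurable_expDensity (hφ : Measurable φ) : Measurable (expDensity φ) :=
  (hφ.exp.div_const _).indicator measurableSet_Ioi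

lemma isDensity_expDensity (hφ : Measurable φ)
    (hint : IntegrableOn (fun x => exp (φ x)) (Ioi 0)) : IsDensity (expDensity φ) := by
  refine ⟨measurable_expDensity hφ, fun x hx => indicator_of_notMem (not_lt.2 hx.le) _,
    expDensity_nonneg, ?_⟩
  rw [setIntegral_congr_fun measurableSet_Ioi fun x hx => expDensity_of_pos hx, integral_div,
    div_self (integral_exp_pos_of_integrableOn hint).ne']

lemma expDensity_div_expDensity (hint : IntegrableOn (fun x => exp (φ x)) (Ioi 0)) {x y : ℝ}
    (hx : 0 < x) (hy : 0 < y) : expDensity φ y / expDensity φ x = exp (φ y - φ x) := by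
  rw [expDensity_of_pos hx, expDensity_of_pos hy,
    div_div_div_cancel_right₀ (integral_exp_pos_of_integrableOn hint).ne', exp_sub]

lemma longTailedDensity_expDensity (hint : IntegrableOn (fun x => exp (φ x)) (Ioi 0))
    (h : ∀ t, Tendsto (fun x => φ (x + t) - φ x) atTop (𝓝 0)) :
    LongTailedDensity (expDensity φ) := by
  refine ⟨(eventually_gt_atTop 0).mono fun x hx => ?_, fun t => ?_⟩
  · rw [expDensity_of_pos hx]
    exact div_pos (exp_pos _) (integral_exp_pos_of_integrableOn hint)
  · rw [← exp_zero]
    refine (h t).rexp.congr' ?_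
    filter_upwards [eventually_gt_atTop 0, eventually_gt_atTop (-t)] with x hx hxt
    rw [expDensity_div_expDensity hint hx (by linarith)]

lemma not_almostDecreasing_expDensity (hint : IntegrableOn (fun x => exp (φ x)) (Ioi 0))
    {x y : ℕ → ℝ} (hx : Tendsto x atTop atTop) (hxy : ∀ n, x n ≤ y n)
    (h : Tendsto (fun n => φ (y n) - φ (x n)) atTop atTop) :
    ¬ AlmostDecreasing (expDensity φ) := by
  rintro ⟨x₀, -, -, C, hC⟩
  obtain ⟨n, hxn, hx0, hn⟩ := ((hx.eventually_ge_atTop x₀).and ((hx.eventually_gt_atTop 0).and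
    ((tendsto_exp_atTop.comp h).eventually_gt_atTop C))).exists
  have hle := hC _ _ hxn (hxy n)
  rw [expDensity_div_expDensity hint hx0 (hx0.trans_le (hxy n))] at hle
  exact hle.not_gt hn


lemma le_integral_expDensity_mul_expDensity (hφ : Measurable φ) (hbdd : BddAbove (range φ))
    {u : ℝ} (hu : 1 < u) (hloc : ∀ y, |y - u| ≤ 1 → |φ y - φ u| ≤ 1) :
    2 * (exp (φ u - 1) / ∫ y in Ioi 0, exp (φ y)) ^ 2 ≤
      ∫ y in 0..2 * u, expDensity φ (2 * u - y) * expDensity φ y := by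
  set Z := ∫ y in Ioi 0, exp (φ y)
  obtain ⟨B, hB⟩ := hbdd
  have hZ : 0 ≤ Z := setIntegral_nonneg measurableSet_Ioi fun _ _ => exp_nonneg _
  have hfB : ∀ x, expDensity φ x ≤ exp B / Z := fun x => by
    unfold expDensity
    refine indicator_le_self' (fun _ _ => by positivity) x |>.trans ?_
    exact div_le_div_of_nonneg_right (exp_le_exp.2 (hB (mem_range_self x))) hZ
  have hmeas := measurable_expDensity hφ
  have hint : IntervalIntegrable (fun y => expDensity φ (2 * u - y) * expDensity φ y) volume
      0 (2 * u) := by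
    refine (intervalIntegrable_const (c := exp B / Z * (exp B / Z))).mono_fun'
      ((hmeas.comp (measurable_const.sub measurable_id)).mul hmeas).aestronglyMeasurable
      (Eventually.of_forall fun y => ?_)
    dsimp only
    rw [norm_of_nonneg (mul_nonneg (expDensity_nonneg _) (expDensity_nonneg _))]
    exact mul_le_mul (hfB _) (hfB _) (expDensity_nonneg _) (by positivity)
  have hlow : ∀ y, |y - u| ≤ 1 → exp (φ u - 1) / Z ≤ expDensity φ y := fun y hy => by
    rw [expDensity_of_pos (by linarith [(abs_le.1 hy).1])]
    exact div_le_div_of_nonneg_right (exp_le_exp.2 (by linarith [(abs_le.1 (hloc y hy)).1])) hZ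
  calc 2 * (exp (φ u - 1) / Z) ^ 2 = ∫ _ in u - 1..u + 1, (exp (φ u - 1) / Z) ^ 2 := by
        rw [intervalIntegral.integral_const, smul_eq_mul]; ring_nf
    _ ≤ ∫ y in u - 1..u + 1, expDensity φ (2 * u - y) * expDensity φ y := by
        refine intervalIntegral.integral_mono_on (by linarith) intervalIntegrable_const
          (hint.mono_set ?_) fun y hy => ?_
        · rw [uIcc_of_le (by linarith), uIcc_of_le (by linarith)]
          exact Icc_subset_Icc (by linarith) (by linarith)
        · rw [sq]
          exact mul_le_mul (hlow _ (abs_le.2 ⟨by linarith [hy.2], by linarith [hy.1]⟩))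
            (hlow y (abs_le.2 ⟨by linarith [hy.1], by linarith [hy.2]⟩)) (by positivity) (expDensity_nonneg _)
    _ ≤ ∫ y in 0..2 * u, expDensity φ (2 * u - y) * expDensity φ y :=
        intervalIntegral.integral_mono_interval (by linarith) (by linarith) (by linarith)
          (Eventually.of_forall fun _ => mul_nonneg (expDensity_nonneg _) (expDensity_nonneg _))
          hint


lemma not_subexpDensity_expDensity (hφ : Measurable φ) (hbdd : BddAbove (range φ))
    (hint : IntegrableOn (fun x => exp (φ x)) (Ioi 0))
    (hloc : ∀ᶠ x in atTop, ∀ y, |y - x| ≤ 1 → |φ y - φ x| ≤ 1)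
    {u : ℕ → ℝ} (hu : Tendsto u atTop atTop)
    (h : Tendsto (fun n => 2 * φ (u n) - φ (2 * u n)) atTop atTop) :
    ¬ SubexpDensity (expDensity φ) := by
  rintro ⟨-, hconv⟩
  have hZ := integral_exp_pos_of_integrableOn hint
  have hratio : ∀ᶠ n in atTop, 2 * exp (-2) / (∫ y in Ioi 0, exp (φ y)) * exp (2 * φ (u n) - φ (2 * u n)) ≤
      (∫ y in 0..2 * u n, expDensity φ (2 * u n - y) * expDensity φ y) / expDensity φ (2 * u n) := by
    filter_upwards [hu.eventually_gt_atTop 1, hu.eventually hloc] with n hn hlocn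
    rw [expDensity_of_pos (by linarith), le_div_iff₀ (by positivity)]
    refine le_trans (le_of_eq ?_) (le_integral_expDensity_mul_expDensity hφ hbdd hn hlocn)
    have hexp : exp (φ (u n) - 1) ^ 2 =
        exp (-2) * exp (2 * φ (u n) - φ (2 * u n)) * exp (φ (2 * u n)) := by
      rw [← exp_add, ← exp_add, ← exp_nat_mul]
      ring_nf
    rw [div_pow, hexp]
    field_simp
  refine not_tendsto_atTop_of_tendsto_nhds (hconv.comp (hu.const_mul_atTop two_pos))
    (tendsto_atTop_mono' _ hratio ?_)
  exact ((tendsto_exp_atTop.comp h).const_mul_atTop (by positivity))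

end ExpDensity

lemma abs_sqrt_mul_sub_sqrt_mul_le {g : ℝ → ℝ} {M L : ℝ} (hM : ∀ x, |g x| ≤ M)
    (hL : ∀ x y, 0 < x → 0 < y → |g y - g x| ≤ L * |log y - log x|) {a b : ℝ}
    (ha : 0 < a) (hb : 0 < b) :
    |√b * g b - √a * g a| ≤ (M / 2 + L) * |b - a| / √(min a b) := by
  wlog hab : a ≤ b generalizing a b
  · rw [abs_sub_comm, abs_sub_comm b, min_comm]
    exact this hb ha (le_of_not_ge hab)
  have hsa : 0 < √a := sqrt_pos.2 ha
  have hsqrt : √b - √a ≤ (b - a) / (2 * √a) := by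
    rw [le_div_iff₀ (by positivity)]
    nlinarith [sq_sqrt ha.le, sq_sqrt hb.le, sqrt_le_sqrt hab]
  have hlog : log b - log a ≤ (b - a) / a := by
    rw [← log_div hb.ne' ha.ne', sub_div, div_self ha.ne']
    exact log_le_sub_one_of_pos (div_pos hb ha)
  have hL0 : 0 ≤ L := by
    have h := hL 1 (exp 1) one_pos (exp_pos 1)
    rw [log_exp, log_one, sub_zero, abs_one, mul_one] at h
    exact (abs_nonneg _).trans h
  rw [min_eq_left hab, abs_of_nonneg (sub_nonneg.2 hab)]
  calc |√b * g b - √a * g a| = |(√b - √a) * g b + √a * (g b - g a)| := by ring_nf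
    _ ≤ (√b - √a) * M + √a * (L * (log b - log a)) := by
        refine (abs_add_le _ _).trans (add_le_add ?_ ?_)
        · rw [abs_mul, abs_of_nonneg (sub_nonneg.2 (sqrt_le_sqrt hab))]
          exact mul_le_mul_of_nonneg_left (hM b) (sub_nonneg.2 (sqrt_le_sqrt hab))
        · rw [abs_mul, abs_of_pos hsa, ← abs_of_nonneg (sub_nonneg.2 (log_le_log ha hab))]
          exact mul_le_mul_of_nonneg_left (hL a b ha hb) hsa.le
    _ ≤ (b - a) / (2 * √a) * M + √a * (L * ((b - a) / a)) := by
        have hM0 : 0 ≤ M := (abs_nonneg _).trans (hM 0)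
        gcongr
    _ = (M / 2 + L) * (b - a) / √a := by
        field_simp
        rw [sq_sqrt ha.le]
        ring

lemma eventually_abs_sub_le_of_abs_sub_le_div_sqrt {φ : ℝ → ℝ} {K : ℝ}
    (hφ : ∀ a b, 0 < a → 0 < b → |φ b - φ a| ≤ K * |b - a| / √(min a b))
    (r : ℝ) {ε : ℝ} (hε : 0 < ε) :
    ∀ᶠ x in atTop, ∀ y, |y - x| ≤ r → |φ y - φ x| ≤ ε := by
  have hlim : Tendsto (fun x => |K| * r / √(x - r)) atTop (𝓝 0) :=
    tendsto_const_nhds.div_atTop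
      (tendsto_sqrt_atTop.comp (tendsto_atTop_add_const_right _ (-r) tendsto_id))
  filter_upwards [hlim.eventually (ge_mem_nhds hε), eventually_gt_atTop r] with x hxε hxr y hy
  obtain ⟨hyl, hyr⟩ := abs_le.1 hy
  have hr : 0 ≤ r := (abs_nonneg _).trans hy
  have hmin : x - r ≤ min x y := le_min (by linarith) (by linarith)
  calc |φ y - φ x| ≤ K * |y - x| / √(min x y) := hφ x y (by linarith) (by linarith)
    _ ≤ |K| * r / √(x - r) :=
        div_le_div₀ (by positivity) (mul_le_mul (le_abs_self K) hy (abs_nonneg _) (abs_nonneg K))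
          (sqrt_pos.2 (by linarith)) (sqrt_le_sqrt hmin)
    _ ≤ ε := hxε

def oscExponent (x : ℝ) : ℝ := √x * (cos (π * logb 2 x) - 2)

lemma oscExponent_le_neg_sqrt (x : ℝ) : oscExponent x ≤ -√x := by
  have := cos_le_one (π * logb 2 x)
  have := sqrt_nonneg x
  unfold oscExponent
  nlinarith

lemma measurable_oscExponent : Measurable oscExponent := by
  unfold oscExponent logb
  fun_prop

lemma bddAbove_range_oscExponent : BddAbove (range oscExponent) :=
  ⟨0, forall_mem_range.2 fun x => (oscExponent_le_neg_sqrt x).trans (neg_nonpos.2 (sqrt_nonneg x))⟩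

lemma integrableOn_exp_oscExponent : IntegrableOn (fun x => exp (oscExponent x)) (Ioi 0) := by
  have hbound : IntegrableOn (fun x : ℝ => exp (-√x)) (Ioi 0) := by
    simpa [sqrt_eq_rpow] using integrableOn_rpow_mul_exp_neg_mul_rpow (s := 0) (p := 1 / 2)
      (by norm_num) (by norm_num) one_pos
  refine hbound.mono' measurable_oscExponent.exp.aestronglyMeasurable
    (Eventually.of_forall fun x => ?_)
  rw [norm_of_nonneg (exp_nonneg _)]
  exact exp_le_exp.2 (oscExponent_le_neg_sqrt x)

lemma eventually_abs_oscExponent_sub_le (r : ℝ) {ε : ℝ} (hε : 0 < ε) :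
    ∀ᶠ x in atTop, ∀ y, |y - x| ≤ r → |oscExponent y - oscExponent x| ≤ ε := by
  refine eventually_abs_sub_le_of_abs_sub_le_div_sqrt
    (fun a b ha hb => abs_sqrt_mul_sub_sqrt_mul_le (g := fun x => cos (π * logb 2 x) - 2) (M := 3) (L := π / log 2) ?_ ?_ ha hb) r hε
  · intro x
    have := neg_one_le_cos (π * logb 2 x)
    have := cos_le_one (π * logb 2 x)
    exact abs_le.2 ⟨by linarith, by linarith⟩
  · intro x y _ _
    calc |cos (π * logb 2 y) - 2 - (cos (π * logb 2 x) - 2)|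
        ≤ |π * logb 2 y - π * logb 2 x| := by
          rw [sub_sub_sub_cancel_right]; exact abs_cos_sub_cos_le _ _
      _ = π / log 2 * |log y - log x| := by
          rw [logb, logb, ← abs_of_pos (div_pos pi_pos (log_pos one_lt_two)), ← abs_mul]
          ring_nf

lemma tendsto_oscExponent_add_sub (t : ℝ) :
    Tendsto (fun x => oscExponent (x + t) - oscExponent x) atTop (𝓝 0) := by
  refine Metric.tendsto_nhds.2 fun ε hε => ?_
  filter_upwards [eventually_abs_oscExponent_sub_le |t| (half_pos hε)] with x hx
  rw [dist_zero_right, norm_eq_abs]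
  exact (hx (x + t) (by rw [add_sub_cancel_left])).trans_lt (half_lt_self hε)

lemma oscExponent_two_pow (n : ℕ) : oscExponent (2 ^ n) = √(2 ^ n) * ((-1) ^ n - 2) := by
  rw [oscExponent, logb_pow, logb_self_eq_one one_lt_two, mul_one, mul_comm π, cos_nat_mul_pi]

lemma oscExponent_four_pow (k : ℕ) : oscExponent (4 ^ k) = -2 ^ k := by
  rw [show (4 : ℝ) ^ k = 2 ^ (2 * k) by rw [pow_mul]; norm_num, oscExponent_two_pow,
    pow_mul (-1 : ℝ), neg_one_sq, one_pow, pow_mul', sqrt_sq (by positivity)]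
  ring

lemma oscExponent_two_mul_four_pow (k : ℕ) : oscExponent (2 * 4 ^ k) = -(3 * √2 * 2 ^ k) := by
  rw [show (2 : ℝ) * 4 ^ k = 2 ^ (2 * k + 1) by rw [pow_succ', pow_mul]; norm_num,
    oscExponent_two_pow, Odd.neg_one_pow ⟨k, rfl⟩, pow_succ', pow_mul' (2 : ℝ), sqrt_mul zero_le_two,
    sqrt_sq (by positivity)]
  ring

theorem longtailed_not_subexponential_density_not_almost_decreasing :
    ∃ f : ℝ → ℝ, IsDensity f ∧ LongTailedDensity f ∧ ¬ SubexpDensity f ∧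
      ¬ AlmostDecreasing f := by
  have hint := integrableOn_exp_oscExponent
  have h4 : Tendsto (fun k : ℕ => (4 : ℝ) ^ k) atTop atTop :=
    tendsto_pow_atTop_atTop_of_one_lt (by norm_num)
  have hgap : Tendsto (fun k : ℕ => (3 * √2 - 2) * (2 : ℝ) ^ k) atTop atTop :=
    (tendsto_pow_atTop_atTop_of_one_lt one_lt_two).const_mul_atTop
      (by nlinarith [one_lt_sqrt_two])
  refine ⟨expDensity oscExponent, isDensity_expDensity measurable_oscExponent hint,
    longTailedDensity_expDensity hint tendsto_oscExponent_add_sub, ?_, ?_⟩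
  · refine not_subexpDensity_expDensity measurable_oscExponent bddAbove_range_oscExponent hint
      (eventually_abs_oscExponent_sub_le 1 one_pos) h4 (hgap.congr fun k => ?_)
    rw [oscExponent_four_pow, oscExponent_two_mul_four_pow]
    ring
  · refine not_almostDecreasing_expDensity hint (x := fun k => 2 * 4 ^ k) (y := fun k => 4 ^ (k + 1))
      (h4.const_mul_atTop two_pos) (fun k => by rw [pow_succ']; gcongr; norm_num)
      (hgap.congr fun k => ?_)
    rw [oscExponent_four_pow, oscExponent_two_mul_four_pow]
    ring
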